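/- With the topological entanglement data of Theorem 1 (ball-tube counting data E, E₁, E₂, E_B and K, K₁, K₂, K_B satisfying the two-party sharing constraints), the Rényi CCNR negativity formula satisfies, for every real number n: 2·E_CCNR(n) = 2·E_PT(n) − (2−n)·S_B; equivalently 2·E_CCNR(n) = S₁ + S₂ − 2·S_B + (1−n)·(S₁ + S₂). -/
import Mathlib


noncomputable section

/-- Topological entropy of a party with `EP` interfaces and Wilson-line interface
counts `KP`, in a theory with total quantum dimension `D` and quantum dimensions `d`:
`S_P = −E_P·log D + Σ_w K_P(w)·log d(w)`. -/
def Sent {W : Type*} [Fintype W] (EP : ℕ) (KP : W → ℕ) (D : ℝ) (d : W → ℝ) : ℝ :=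
  -(EP : ℝ) * Real.log D + ∑ w, (KP w : ℝ) * Real.log (d w)

/-- Rényi partial-transpose negativity formula. -/
def EPT {W : Type*} [Fintype W] (E EB : ℕ) (K KB : W → ℕ) (D : ℝ) (d : W → ℝ)
    (n : ℝ) : ℝ :=
  -((E : ℝ) - (EB : ℝ) + (E : ℝ) * (1 - n)) * Real.log D +
    ∑ w, ((K w : ℝ) - (KB w : ℝ) + (K w : ℝ) * (1 - n)) * Real.log (d w)

/-- Rényi CCNR negativity formula. -/
def ECCNR {W : Type*} [Fintype W] (E EB : ℕ) (K KB : W → ℕ) (D : ℝ) (d : W → ℝ)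
    (n : ℝ) : ℝ :=
  -((E : ℝ) - (3 / 2) * (EB : ℝ) + ((E : ℝ) - (EB : ℝ) / 2) * (1 - n)) * Real.log D +
    ∑ w, ((K w : ℝ) - (3 / 2) * (KB w : ℝ) + ((K w : ℝ) - (KB w : ℝ) / 2) * (1 - n)) *
      Real.log (d w)

end

/-- Rényi CCNR negativity relation: `2·E_CCNR(n) = 2·E_PT(n) − (2−n)·S_B`, equivalently
`2·E_CCNR(n) = S₁ + S₂ − 2·S_B + (1−n)(S₁+S₂)`. -/
theorem two_ECCNR_eq {W : Type*} [Fintype W] (D : ℝ) (hD : 0 < D)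
    (d : W → ℝ) (hd : ∀ w, 0 < d w)
    (E E₁ E₂ EB : ℕ) (hE : E₁ + E₂ + EB = 2 * E)
    (K K₁ K₂ KB : W → ℕ) (hK : ∀ w, K₁ w + K₂ w + KB w = 2 * K w) (n : ℝ) :
    2 * ECCNR E EB K KB D d n = 2 * EPT E EB K KB D d n - (2 - n) * Sent EB KB D d ∧
    2 * ECCNR E EB K KB D d n =
      Sent E₁ K₁ D d + Sent E₂ K₂ D d - 2 * Sent EB KB D d +
        (1 - n) * (Sent E₁ K₁ D d + Sent E₂ K₂ D d) := by
  have hEr : (E₁ : ℝ) + E₂ + EB = 2 * E := by exact_mod_cast congrArg (Nat.cast : ℕ → ℝ) hE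
  have hA : (∑ w, (K₁ w : ℝ) * Real.log (d w)) + (∑ w, (K₂ w : ℝ) * Real.log (d w))
      + (∑ w, (KB w : ℝ) * Real.log (d w)) = 2 * ∑ w, (K w : ℝ) * Real.log (d w) := by
    rw [Finset.mul_sum, ← Finset.sum_add_distrib, ← Finset.sum_add_distrib]
    refine Finset.sum_congr rfl fun w _ => ?_
    have : (K₁ w : ℝ) + K₂ w + KB w = 2 * K w := by
      exact_mod_cast congrArg (Nat.cast : ℕ → ℝ) (hK w)
    linear_combination Real.log (d w) * this
  have eCC : (∑ w, ((K w : ℝ) - (3 / 2) * (KB w : ℝ) + ((K w : ℝ) - (KB w : ℝ) / 2) * (1 - n))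
        * Real.log (d w))
      = (2 - n) * (∑ w, (K w : ℝ) * Real.log (d w))
        - (4 - n) / 2 * (∑ w, (KB w : ℝ) * Real.log (d w)) := by
    rw [Finset.mul_sum, Finset.mul_sum, ← Finset.sum_sub_distrib]
    refine Finset.sum_congr rfl fun w _ => by ring
  have ePT : (∑ w, ((K w : ℝ) - (KB w : ℝ) + (K w : ℝ) * (1 - n)) * Real.log (d w))
      = (2 - n) * (∑ w, (K w : ℝ) * Real.log (d w)) - ∑ w, (KB w : ℝ) * Real.log (d w) := by
    rw [Finset.mul_sum, ← Finset.sum_sub_distrib]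
    refine Finset.sum_congr rfl fun w _ => by ring
  constructor
  · simp only [ECCNR, EPT, Sent, eCC, ePT]
    ring
  · simp only [ECCNR, Sent, eCC]
    linear_combination (n - 2) * hA + (2 - n) * Real.log D * hEr
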